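/- Let β > 1, γ > 0, K₁ > 0, K₂ > 0 be real constants. Let x₁, x₂ : ℝ → ℝ be differentiable at a time t with x₁(t) ≠ 0 and z₂(t) ≠ 0, where z₂ = x₂ + K₁·sign(x₁)·|x₁|^(|x₁|^β), satisfying ẋ₁(t) = x₂(t) and ẋ₂(t) = u(t) with u = −K₂·sign(z₂)·|z₂|^(|z₂|^γ) − ( x₁ + K₁·|x₁|^(|x₁|^β + β − 1)·(1 + β·ln|x₁|)·(−K₁·sign(x₁)·|x₁|^(|x₁|^β) + z₂) ). Then the Lyapunov function V₂ = x₁²/2 + z₂²/2 is differentiable at t with derivative V̇₂(t) = −K₁·|x₁(t)|^(1 + |x₁(t)|^β) − K₂·|z₂(t)|^(1 + |z₂(t)|^γ). In particular V̇₂(t) < 0. -/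

import Mathlib

/-!
On `y > 0` the power tower `y ^ y ^ β = exp (y ^ β * log y)` has derivative
`y ^ (y ^ β + β - 1) * (1 + β * log y)`, so its odd extension `φ y = sign y * |y| ^ |y| ^ β`
has derivative `φ'(y) = |y| ^ (|y| ^ β + β - 1) * (1 + β * log |y|)` at every `y ≠ 0`.
The control is built so that `ż₂ = u + K₁ φ'(x₁) x₂ = -K₂ ⌈z₂⌋ ^ |z₂| ^ γ - x₁`. In
`V̇₂ = x₁ (z₂ - K₁ φ(x₁)) + z₂ ż₂` the cross terms `± x₁ z₂` cancel, and since
`r * sign r = |r|`, what remains is `-K₁ |x₁| ^ (1 + |x₁| ^ β) - K₂ |z₂| ^ (1 + |z₂| ^ γ)`.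
-/

open Real Filter

namespace Real

theorem sign_mul_self_eq_abs (r : ℝ) : sign r * r = |r| := by
  rcases lt_trichotomy r 0 with h | rfl | h
  · rw [sign_of_neg h, abs_of_neg h, neg_one_mul]
  · rw [sign_zero, zero_mul, abs_zero]
  · rw [sign_of_pos h, abs_of_pos h, one_mul]

theorem rpow_one_add_of_nonneg {x y : ℝ} (hx : 0 ≤ x) (hy : 0 ≤ y) :
    x ^ (1 + y) = x * x ^ y := by
  rw [rpow_add' hx (by positivity), rpow_one]

theorem hasDerivAt_rpow_self_rpow (β : ℝ) {c : ℝ} (hc : 0 < c) :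
    HasDerivAt (fun y => y ^ y ^ β) (c ^ (c ^ β + β - 1) * (1 + β * log c)) c := by
  have hsplit : c ^ (c ^ β + β - 1) = c ^ β * c ^ (c ^ β - 1) := by
    rw [← rpow_add hc]; ring_nf
  have hsplit' : c ^ (c ^ β + β - 1) = c ^ (β - 1) * c ^ c ^ β := by
    rw [← rpow_add hc]; ring_nf
  refine ((hasDerivAt_id c).rpow (hasDerivAt_rpow_const (Or.inl hc.ne')) hc).congr_deriv ?_
  simp only [id]
  linear_combination -hsplit - β * log c * hsplit'

end Real

theorem HasDerivAt.sign_mul_comp_abs {f : ℝ → ℝ} {f' c : ℝ} (hf : HasDerivAt f f' |c|)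
    (hc : c ≠ 0) : HasDerivAt (fun y => sign y * f |y|) f' c := by
  rcases hc.lt_or_gt with h | h
  · have hodd : HasDerivAt (fun y => -f (-y)) f' c :=
      ((abs_of_neg h ▸ hf).comp c (hasDerivAt_neg c)).fun_neg.congr_deriv (by ring)
    refine hodd.congr_of_eventuallyEq ?_
    filter_upwards [eventually_lt_nhds h] with y hy
    rw [sign_of_neg hy, abs_of_neg hy, neg_one_mul]
  · refine (abs_of_pos h ▸ hf).congr_of_eventuallyEq ?_
    filter_upwards [eventually_gt_nhds h] with y hy
    rw [sign_of_pos hy, abs_of_pos hy, one_mul]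

theorem HasDerivAt.sq_div_two {f : ℝ → ℝ} {f' t : ℝ} (hf : HasDerivAt f f' t) :
    HasDerivAt (fun s => f s ^ 2 / 2) (f t * f') t :=
  ((hf.fun_pow 2).div_const 2).congr_deriv (by ring)

theorem powerTower_V2_deriv_general (β γ K₁ K₂ : ℝ)
    (hK₁ : 0 < K₁) (hK₂ : 0 < K₂)
    (x₁ x₂ : ℝ → ℝ) (t x₁' x₂' : ℝ)
    (hx₁ : HasDerivAt x₁ x₁' t) (hx₂ : HasDerivAt x₂ x₂' t)
    (z₂ : ℝ → ℝ)
    (hz₂ : z₂ = fun s : ℝ => x₂ s + K₁ * Real.sign (x₁ s) * |x₁ s| ^ (|x₁ s| ^ β))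
    (hne1 : x₁ t ≠ 0)
    (h1 : x₁' = x₂ t)
    (h2 : x₂' = -K₂ * Real.sign (z₂ t) * |z₂ t| ^ (|z₂ t| ^ γ) -
      (x₁ t + K₁ * |x₁ t| ^ (|x₁ t| ^ β + β - 1) * (1 + β * Real.log |x₁ t|) *
        (-K₁ * Real.sign (x₁ t) * |x₁ t| ^ (|x₁ t| ^ β) + z₂ t))) :
    HasDerivAt (fun s : ℝ => x₁ s ^ 2 / 2 + z₂ s ^ 2 / 2)
      (-K₁ * |x₁ t| ^ (1 + |x₁ t| ^ β) - K₂ * |z₂ t| ^ (1 + |z₂ t| ^ γ)) t ∧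
    -K₁ * |x₁ t| ^ (1 + |x₁ t| ^ β) - K₂ * |z₂ t| ^ (1 + |z₂ t| ^ γ) < 0 := by
  set φ' := |x₁ t| ^ (|x₁ t| ^ β + β - 1) * (1 + β * log |x₁ t|)
  have hφ : HasDerivAt (fun s => sign (x₁ s) * |x₁ s| ^ |x₁ s| ^ β) (φ' * x₁') t :=
    ((hasDerivAt_rpow_self_rpow β (abs_pos.2 hne1)).sign_mul_comp_abs hne1).comp t hx₁
  have hz₂' : HasDerivAt z₂ (x₂' + K₁ * (φ' * x₁')) t := by
    rw [hz₂]
    exact hx₂.add (by simpa only [mul_assoc] using hφ.const_mul K₁)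
  have hx₂t : x₂ t = z₂ t - K₁ * sign (x₁ t) * |x₁ t| ^ |x₁ t| ^ β := by
    rw [hz₂]; ring
  have hV₂' : x₁ t * x₁' + z₂ t * (x₂' + K₁ * (φ' * x₁')) =
      -K₁ * |x₁ t| ^ (1 + |x₁ t| ^ β) - K₂ * |z₂ t| ^ (1 + |z₂ t| ^ γ) := by
    rw [h1, h2, hx₂t, rpow_one_add_of_nonneg (abs_nonneg _) (by positivity),
      rpow_one_add_of_nonneg (abs_nonneg _) (by positivity)]
    linear_combination (-(K₁ * |x₁ t| ^ |x₁ t| ^ β)) * sign_mul_self_eq_abs (x₁ t) -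
      (K₂ * |z₂ t| ^ |z₂ t| ^ γ) * sign_mul_self_eq_abs (z₂ t)
  refine ⟨hV₂' ▸ hx₁.sq_div_two.add hz₂'.sq_div_two, ?_⟩
  have hx₁_pos : 0 < K₁ * |x₁ t| ^ (1 + |x₁ t| ^ β) := by positivity
  have hz₂_nonneg : 0 ≤ K₂ * |z₂ t| ^ (1 + |z₂ t| ^ γ) := by positivity
  linarith

/-- Theorem 1 (Lyapunov computation): along the double integrator ẋ₁ = x₂, ẋ₂ = u
with the power tower backstepping control u, the Lyapunov function
V₂ = x₁²/2 + z₂²/2 satisfies V̇₂ = −K₁·|x₁|^(1+|x₁|^β) − K₂·|z₂|^(1+|z₂|^γ) < 0. -/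
theorem powerTower_V2_deriv (β γ K₁ K₂ : ℝ) (hβ : 1 < β) (hγ : 0 < γ)
    (hK₁ : 0 < K₁) (hK₂ : 0 < K₂)
    (x₁ x₂ : ℝ → ℝ) (t x₁' x₂' : ℝ)
    (hx₁ : HasDerivAt x₁ x₁' t) (hx₂ : HasDerivAt x₂ x₂' t)
    (z₂ : ℝ → ℝ)
    (hz₂ : z₂ = fun s : ℝ => x₂ s + K₁ * Real.sign (x₁ s) * |x₁ s| ^ (|x₁ s| ^ β))
    (hne1 : x₁ t ≠ 0) (hne2 : z₂ t ≠ 0)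
    (h1 : x₁' = x₂ t)
    (h2 : x₂' = -K₂ * Real.sign (z₂ t) * |z₂ t| ^ (|z₂ t| ^ γ) -
      (x₁ t + K₁ * |x₁ t| ^ (|x₁ t| ^ β + β - 1) * (1 + β * Real.log |x₁ t|) *
        (-K₁ * Real.sign (x₁ t) * |x₁ t| ^ (|x₁ t| ^ β) + z₂ t))) :
    HasDerivAt (fun s : ℝ => x₁ s ^ 2 / 2 + z₂ s ^ 2 / 2)
      (-K₁ * |x₁ t| ^ (1 + |x₁ t| ^ β) - K₂ * |z₂ t| ^ (1 + |z₂ t| ^ γ)) t ∧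
    -K₁ * |x₁ t| ^ (1 + |x₁ t| ^ β) - K₂ * |z₂ t| ^ (1 + |z₂ t| ^ γ) < 0 :=
  powerTower_V2_deriv_general β γ K₁ K₂ hK₁ hK₂ x₁ x₂ t x₁' x₂' hx₁ hx₂ z₂ hz₂ hne1 h1 h2
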